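/- Let P = {k ∈ {1,…,K} : price v_k is optimal for x*}. Then x* lies in the relative interior of the convex hull of the finite set {x^S : P ⊆ S ⊆ {1,…,K}}. -/

import Mathlib

open Finset

/-- A market: a probability vector over the `K` valuations. -/
def IsMarket (K : ℕ) (x : Fin K → ℝ) : Prop :=
  (∀ j, 0 ≤ x j) ∧ ∑ j, x j = 1

/-- Revenue from charging price `v k` in market `x`. -/
def rev {K : ℕ} (v x : Fin K → ℝ) (k : Fin K) : ℝ :=
  v k * ∑ j ∈ Finset.Ici k, x j

/-- Price `v k` is optimal for market `x`. -/
def OptPrice {K : ℕ} (v x : Fin K → ℝ) (k : Fin K) : Prop :=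
  ∀ i, rev v x i ≤ rev v x k

/-- A segmentation of the aggregate market `xstar`: a finitely supported probability
distribution on markets averaging to `xstar`. -/
def IsSegmentation {K : ℕ} (xstar : Fin K → ℝ) (σ : (Fin K → ℝ) →₀ ℝ) : Prop :=
  (∀ x, 0 ≤ σ x) ∧ (∑ x ∈ σ.support, σ x = 1) ∧
  (∀ x ∈ σ.support, IsMarket K x) ∧
  (∑ x ∈ σ.support, σ x • x = xstar)

/-- A pricing rule assigns a probability vector over prices to each market in the support. -/
def IsPricingRule {K : ℕ} (σ : (Fin K → ℝ) →₀ ℝ) (φ : (Fin K → ℝ) → Fin K → ℝ) : Prop :=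
  ∀ x ∈ σ.support, (∀ k, 0 ≤ φ x k) ∧ ∑ k, φ x k = 1

/-- A pricing rule is optimal if it only charges optimal prices. -/
def IsOptimalPricing {K : ℕ} (v : Fin K → ℝ) (σ : (Fin K → ℝ) →₀ ℝ)
    (φ : (Fin K → ℝ) → Fin K → ℝ) : Prop :=
  ∀ x ∈ σ.support, ∀ k, 0 < φ x k → OptPrice v x k

/-- Consumer surplus of a segmentation and pricing rule. -/
def consumerSurplus {K : ℕ} (v : Fin K → ℝ) (σ : (Fin K → ℝ) →₀ ℝ)
    (φ : (Fin K → ℝ) → Fin K → ℝ) : ℝ :=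
  ∑ x ∈ σ.support, σ x * ∑ k, φ x k * ∑ j ∈ Finset.Ici k, (v j - v k) * x j

/-- Producer surplus of a segmentation and pricing rule. -/
def producerSurplus {K : ℕ} (v : Fin K → ℝ) (σ : (Fin K → ℝ) →₀ ℝ)
    (φ : (Fin K → ℝ) → Fin K → ℝ) : ℝ :=
  ∑ x ∈ σ.support, σ x * ∑ k, φ x k * (v k * ∑ j ∈ Finset.Ici k, x j)

/-- A direct segmentation: markets `xs k` for `k ∈ A`, pairwise distinct, with
`xs k ∈ X_k`, weights `w k > 0` summing to one and averaging to `xstar`. -/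
def IsDirectSeg {K : ℕ} (v xstar : Fin K → ℝ) (A : Finset (Fin K))
    (xs : Fin K → Fin K → ℝ) (w : Fin K → ℝ) : Prop :=
  Set.InjOn xs (A : Set (Fin K)) ∧
  (∀ k ∈ A, IsMarket K (xs k)) ∧
  (∀ k ∈ A, OptPrice v (xs k) k) ∧
  (∀ k ∈ A, 0 < w k) ∧
  (∑ k ∈ A, w k = 1) ∧
  (∑ k ∈ A, w k • xs k = xstar)

/-- Consumer surplus of a direct segmentation (with its direct pricing rule). -/
def directCS {K : ℕ} (v : Fin K → ℝ) (A : Finset (Fin K))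
    (xs : Fin K → Fin K → ℝ) (w : Fin K → ℝ) : ℝ :=
  ∑ k ∈ A, w k * ∑ j ∈ Finset.Ici k, (v j - v k) * xs k j

/-- Producer surplus of a direct segmentation (with its direct pricing rule). -/
def directPS {K : ℕ} (v : Fin K → ℝ) (A : Finset (Fin K))
    (xs : Fin K → Fin K → ℝ) (w : Fin K → ℝ) : ℝ :=
  ∑ k ∈ A, w k * (v k * ∑ j ∈ Finset.Ici k, xs k j)

/-- `x` is the characteristic market `x^S`: supported in `S`, and every price in `S`
yields the same revenue. -/
def IsCharMarket {K : ℕ} (v : Fin K → ℝ) (S : Finset (Fin K)) (x : Fin K → ℝ) : Prop :=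
  IsMarket K x ∧ (∀ j ∉ S, x j = 0) ∧ ∀ i ∈ S, ∀ i' ∈ S, rev v x i = rev v x i'

/-- The joint distribution over valuations and prices induced by `(σ, φ)`:
mass of the pair `(v j, v k)`. -/
def jointDist {K : ℕ} (σ : (Fin K → ℝ) →₀ ℝ) (φ : (Fin K → ℝ) → Fin K → ℝ)
    (j k : Fin K) : ℝ :=
  ∑ x ∈ σ.support, σ x * φ x k * x j

/-- The joint distribution over valuations and prices induced by a direct segmentation
with its direct pricing rule. -/
def directJoint {K : ℕ} (A : Finset (Fin K)) (xs : Fin K → Fin K → ℝ) (w : Fin K → ℝ)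
    (j k : Fin K) : ℝ :=
  if k ∈ A then w k * xs k j else 0

/-- The total mass `m_k` of price `v k` under `(σ, φ)`. -/
noncomputable def mass {K : ℕ} (σ : (Fin K → ℝ) →₀ ℝ) (φ : (Fin K → ℝ) → Fin K → ℝ)
    (k : Fin K) : ℝ :=
  ∑ x ∈ σ.support, σ x * φ x k

/-- The conditional market `x^k` given price `v k` under `(σ, φ)`. -/
noncomputable def condMarket {K : ℕ} (σ : (Fin K → ℝ) →₀ ℝ) (φ : (Fin K → ℝ) → Fin K → ℝ)
    (k : Fin K) : Fin K → ℝ :=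
  (mass σ φ k)⁻¹ • ∑ x ∈ σ.support, (σ x * φ x k) • x

/-!
Every market `y` is a convex combination of the markets `x^S` with `S ⊇ Opt(y)`: subtract from `y`
the largest multiple of `x^{Opt(y)}` that leaves a nonnegative remainder on which the prices of
`Opt(y)` stay optimal. After rescaling, the remainder is a market that has lost a consumer type or
gained an optimal price, so induction applies.

Let `b` be the barycentre of the `x^S` with `S ⊇ P`; its revenue is constant on `P`. Since `x*` has
full support and its non-optimal prices are strictly suboptimal, `z = (1 + ε) x* - ε b` is, for
small `ε > 0`, a market whose optimal prices contain `P`, hence a convex combination of those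
`x^S`. Then `x* = (z + ε b) / (1 + ε)` is a combination of all of them with positive weights, and
such a point lies in the relative interior of their convex hull.
-/

theorem exists_weights_of_mem_convexHull_range {ι E : Type*} [Fintype ι] [AddCommGroup E]
    [Module ℝ E] {z : ι → E} {y : E} (hy : y ∈ convexHull ℝ (Set.range z)) :
    ∃ u : ι → ℝ, (∀ i, 0 ≤ u i) ∧ ∑ i, u i = 1 ∧ ∑ i, u i • z i = y := by
  classical
  have hz : Set.range z =
      Fintype.linearCombination ℝ z '' Set.range fun i => Pi.single i (1 : ℝ) := by
    rw [← Set.range_comp]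
    congr 1
    funext i
    simp [Fintype.linearCombination_apply, Pi.single_apply]
  rw [hz, ← LinearMap.image_convexHull, convexHull_rangle_single_eq_stdSimplex] at hy
  obtain ⟨u, ⟨hu0, hu1⟩, rfl⟩ := hy
  exact ⟨u, hu0, hu1, (Fintype.linearCombination_apply ℝ z u).symm⟩

theorem sub_mem_range_linearCombination_of_mem_affineSpan {ι E : Type*} [Fintype ι]
    [AddCommGroup E] [Module ℝ E] {z : ι → E} (p : E) {q : E}
    (hq : q ∈ affineSpan ℝ (Set.range z)) :
    q - p ∈ LinearMap.range (Fintype.linearCombination ℝ fun i => z i - p) := by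
  classical
  refine AffineSubspace.mem_mk'.1 (affineSpan_le.2 ?_ hq)
  rintro _ ⟨i, rfl⟩
  exact AffineSubspace.mem_mk'.2 ⟨Pi.single i 1, by simp⟩

open Filter Topology in
theorem sum_smul_mem_intrinsicInterior_convexHull {ι E : Type*} [Fintype ι]
    [NormedAddCommGroup E] [NormedSpace ℝ E] {z : ι → E} {w : ι → ℝ}
    (hw : ∀ i, 0 < w i) (hw1 : ∑ i, w i = 1) :
    ∑ i, w i • z i ∈ intrinsicInterior ℝ (convexHull ℝ (Set.range z)) := by
  set p := ∑ i, w i • z i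
  set C := convexHull ℝ (Set.range z)
  let L : (ι → ℝ) →ₗ[ℝ] E := Fintype.linearCombination ℝ fun i => z i - p
  -- Moving `p` by `L c` changes the weights `w` into `w' c`, which stay positive for small `c`;
  -- by the open mapping theorem, every point of the affine span near `p` is such a move.
  let w' : (ι → ℝ) → ι → ℝ := fun c i => w i + c i - (∑ j, c j) * w i
  have hL : ∀ c, p + L c = ∑ i, w' c i • z i := fun c => by
    simp only [L, w', Fintype.linearCombination_apply, smul_sub, sum_sub_distrib, ← sum_smul,
      add_smul, sub_smul, sum_add_distrib, mul_smul, ← smul_sum, p]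
    abel
  have hw'1 : ∀ c, ∑ i, w' c i = 1 := fun c => by
    simp only [w', sum_sub_distrib, sum_add_distrib, ← mul_sum, hw1]
    ring
  have hpos : ∀ᶠ c in 𝓝 0, ∀ i, 0 < w' c i := eventually_all.2 fun i =>
    ((by fun_prop : Continuous fun c => w' c i).tendsto 0).eventually
      (lt_mem_nhds (by simpa [w'] using hw i))
  have hmem : ∀ u : ι → ℝ, (∀ i, 0 < u i) → ∑ i, u i = 1 → ∑ i, u i • z i ∈ C := fun u hu hu1 =>
    (convex_convexHull ℝ _).sum_mem (fun i _ => (hu i).le) hu1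
      fun i _ => subset_convexHull ℝ _ (Set.mem_range_self i)
  have hpA : p ∈ affineSpan ℝ C := subset_affineSpan ℝ _ (hmem w hw hw1)
  have hspan : affineSpan ℝ C = affineSpan ℝ (Set.range z) := affineSpan_convexHull _
  let δ : affineSpan ℝ C → LinearMap.range L := fun q =>
    ⟨q - p, sub_mem_range_linearCombination_of_mem_affineSpan p (hspan ▸ q.2)⟩
  have hδp : δ ⟨p, hpA⟩ = L.rangeRestrict 0 := by ext; simp [δ]
  have hopen := L.rangeRestrict.isOpenMap_of_finiteDimensional L.surjective_rangeRestrict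
  refine ⟨⟨p, hpA⟩, mem_interior_iff_mem_nhds.2 <| mem_of_superset
    ((by fun_prop : Continuous δ).continuousAt.preimage_mem_nhds
      (hδp ▸ hopen.image_mem_nhds hpos)) ?_, rfl⟩
  rintro q ⟨c, hc, hcq⟩
  have hq : (q : E) = p + L c := by
    rw [← sub_eq_iff_eq_add']
    exact congrArg Subtype.val hcq.symm
  show (q : E) ∈ C
  rw [hq, hL]
  exact hmem _ hc (hw'1 c)

theorem mem_intrinsicInterior_convexHull_of_extension {ι E : Type*} [Fintype ι]
    [NormedAddCommGroup E] [NormedSpace ℝ E] {z : ι → E} {w : ι → ℝ}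
    (hw : ∀ i, 0 < w i) (hw1 : ∑ i, w i = 1) {x : E} {ε : ℝ} (hε : 0 < ε)
    (hx : (1 + ε) • x - ε • ∑ i, w i • z i ∈ convexHull ℝ (Set.range z)) :
    x ∈ intrinsicInterior ℝ (convexHull ℝ (Set.range z)) := by
  obtain ⟨u, hu0, hu1, hu⟩ := exists_weights_of_mem_convexHull_range hx
  have h1ε : 0 < 1 + ε := by linarith
  have hx_eq : x = ∑ i, ((1 + ε)⁻¹ * u i + ε / (1 + ε) * w i) • z i := calc
    x = (1 + ε)⁻¹ • ((1 + ε) • x - ε • ∑ i, w i • z i) + (ε / (1 + ε)) • ∑ i, w i • z i := by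
      rw [smul_sub, smul_smul, smul_smul, inv_mul_cancel₀ h1ε.ne', one_smul, div_eq_inv_mul,
        sub_add_cancel]
    _ = _ := by simp only [add_smul, mul_smul, sum_add_distrib, ← smul_sum, hu]
  rw [hx_eq]
  refine sum_smul_mem_intrinsicInterior_convexHull (fun i => add_pos_of_nonneg_of_pos
    (mul_nonneg (inv_pos.2 h1ε).le (hu0 i)) (mul_pos (div_pos hε h1ε) (hw i))) ?_
  simp only [sum_add_distrib, ← mul_sum, hu1, hw1]
  field_simp

theorem exists_largest_pos_mul_le {κ : Type*} [Fintype κ] (a c : κ → ℝ) (hc : ∀ k, 0 ≤ c k)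
    (hac : ∀ k, 0 < a k → 0 < c k) (ha : ∃ k, 0 < a k) :
    ∃ t, 0 < t ∧ (∀ k, t * a k ≤ c k) ∧ ∃ k, 0 < a k ∧ t * a k = c k := by
  classical
  obtain ⟨k₀, hk₀, hmin⟩ := exists_min_image (univ.filter fun k => 0 < a k) (fun k => c k / a k)
    (by simpa [Finset.Nonempty] using ha)
  have ha₀ : 0 < a k₀ := (mem_filter.1 hk₀).2
  have ht : 0 < c k₀ / a k₀ := div_pos (hac k₀ ha₀) ha₀
  refine ⟨c k₀ / a k₀, ht, fun k => ?_, k₀, ha₀, div_mul_cancel₀ _ ha₀.ne'⟩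
  rcases lt_or_ge 0 (a k) with hk | hk
  · exact (le_div_iff₀ hk).1 (hmin k (by simp [hk]))
  · exact (mul_nonpos_of_nonneg_of_nonpos ht.le hk).trans (hc k)

section Market

variable {K : ℕ} {v x y e b : Fin K → ℝ} {O : Finset (Fin K)} {i k : Fin K}

theorem IsMarket.exists_pos (hx : IsMarket K x) : ∃ j, 0 < x j := by
  obtain ⟨j, -, hj⟩ := exists_ne_zero_of_sum_ne_zero (hx.2 ▸ one_ne_zero : ∑ j, x j ≠ 0)
  exact ⟨j, (hx.1 j).lt_of_ne' hj⟩

theorem IsMarket.eq_of_le (hx : IsMarket K x) (hy : IsMarket K y) (hxy : ∀ j, x j ≤ y j) :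
    x = y :=
  funext fun j => (sum_eq_sum_iff_of_le fun j _ => hxy j).1 (hx.2.trans hy.2.symm) j (mem_univ j)

theorem IsMarket.exists_optPrice (hx : IsMarket K x) : ∃ k, OptPrice v x k := by
  obtain ⟨j, -⟩ := hx.exists_pos
  obtain ⟨k, -, hk⟩ := exists_max_image univ (rev v x) ⟨j, mem_univ j⟩
  exact ⟨k, fun i => hk i (mem_univ i)⟩

theorem rev_sub (x y : Fin K → ℝ) (k : Fin K) : rev v (x - y) k = rev v x k - rev v y k := by
  simp only [rev, Pi.sub_apply, sum_sub_distrib, mul_sub]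

theorem rev_smul (a : ℝ) (x : Fin K → ℝ) (k : Fin K) : rev v (a • x) k = a * rev v x k := by
  simp only [rev, Pi.smul_apply, smul_eq_mul, ← mul_sum]
  ring

theorem rev_sum {ι : Type*} (s : Finset ι) (x : ι → Fin K → ℝ) (k : Fin K) :
    rev v (∑ i ∈ s, x i) k = ∑ i ∈ s, rev v (x i) k := by
  simp only [rev, Finset.sum_apply, mul_sum]
  exact sum_comm

theorem OptPrice.rev_lt_of_not_optPrice (hk : OptPrice v x k) (hi : ¬ OptPrice v x i) :
    rev v x i < rev v x k := by
  by_contra! h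
  exact hi fun i' => (hk i').trans h

theorem OptPrice.pos (hv0 : ∀ k, 0 < v k) (hv : StrictMono v) (hx : IsMarket K x)
    (hk : OptPrice v x k) : 0 < x k := by
  -- Otherwise the next higher price sells to the same consumers and earns more.
  by_contra! hxk
  obtain ⟨j, hj⟩ := hx.exists_pos
  have hrev_pos : 0 < rev v x k := calc
    0 < v j * x j := mul_pos (hv0 j) hj
    _ ≤ rev v x j := mul_le_mul_of_nonneg_left
      (single_le_sum (fun i _ => hx.1 i) (mem_Ici.2 le_rfl)) (hv0 j).le
    _ ≤ rev v x k := hk j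
  have htail : 0 < ∑ i ∈ Ici k, x i := pos_of_mul_pos_right hrev_pos (hv0 k).le
  have htail' : ∑ i ∈ Ici k, x i ≤ ∑ i ∈ Ioi k, x i := by
    rw [← Ioi_insert, sum_insert notMem_Ioi_self]
    linarith
  obtain ⟨i, hi, -⟩ := exists_ne_zero_of_sum_ne_zero (htail.trans_le htail').ne'
  have hmax : ¬ IsMax k := not_isMax_of_lt (mem_Ioi.1 hi)
  have hsucc : Ici (Order.succ k) = Ioi k := by
    ext i
    simp [Order.succ_le_iff_of_not_isMax hmax]
  have hle := hk (Order.succ k)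
  simp only [rev, hsucc] at hle
  have := mul_lt_mul_of_pos_right (hv (Order.lt_succ_of_not_isMax hmax)) htail
  nlinarith [mul_le_mul_of_nonneg_left htail' (hv0 (Order.succ k)).le]

theorem isMarket_sum_smul {ι : Type*} [Fintype ι] {w : ι → ℝ} {x : ι → Fin K → ℝ}
    (hw0 : ∀ i, 0 ≤ w i) (hw1 : ∑ i, w i = 1) (hx : ∀ i, IsMarket K (x i)) :
    IsMarket K (∑ i, w i • x i) := by
  refine ⟨fun j => ?_, ?_⟩
  · simp only [Finset.sum_apply, Pi.smul_apply, smul_eq_mul]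
    exact sum_nonneg fun i _ => mul_nonneg (hw0 i) ((hx i).1 j)
  · simp only [Finset.sum_apply, Pi.smul_apply, smul_eq_mul]
    rw [sum_comm]
    simp [← mul_sum, (hx _).2, hw1]

theorem optPrice_smul_iff {a : ℝ} (ha : 0 < a) :
    OptPrice v (a • x) k ↔ OptPrice v x k := by
  simp only [OptPrice, rev_smul, mul_le_mul_iff_of_pos_left ha]

theorem IsMarket.exists_peel_scale (hv0 : ∀ k, 0 < v k) (hv : StrictMono v) (hy : IsMarket K y)
    (hO : ∀ k, k ∈ O ↔ OptPrice v y k) (he : IsCharMarket v O e) (hne : y ≠ e) :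
    ∃ t : ℝ, 0 < t ∧ t < 1 ∧ (∀ j, t * e j ≤ y j) ∧
      (∀ k, OptPrice v y k → OptPrice v (y - t • e) k) ∧
      ((∃ j, 0 < y j ∧ y j = t * e j) ∨ ∃ i, ¬ OptPrice v y i ∧ OptPrice v (y - t • e) i) := by
  obtain ⟨he_mkt, he_zero, he_rev⟩ := he
  obtain ⟨k₀, hk₀⟩ := hy.exists_optPrice (v := v)
  have hrev : ∀ t i, rev v (y - t • e) i = rev v y i - t * rev v e i := fun t i => by
    rw [rev_sub, rev_smul]
  -- constraints `inl j`: `t * e j ≤ y j`, and `inr i`: `rev (y - t • e) i ≤ rev (y - t • e) k₀`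
  obtain ⟨t, ht0, hle, k, hak, htight⟩ := exists_largest_pos_mul_le
    (Sum.elim e fun i => rev v e k₀ - rev v e i) (Sum.elim y fun i => rev v y k₀ - rev v y i)
    (Sum.forall.2 ⟨hy.1, fun i => sub_nonneg.2 (hk₀ i)⟩)
    (Sum.forall.2 ⟨fun j hj => ((hO j).1 (by_contra fun h => hj.ne' (he_zero j h))).pos hv0 hv hy,
      fun i hi => sub_pos.2 (hk₀.rev_lt_of_not_optPrice fun hopt => by
        simp [he_rev i ((hO i).2 hopt) k₀ ((hO k₀).2 hk₀)] at hi)⟩)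
    (let ⟨j, hj⟩ := he_mkt.exists_pos; ⟨.inl j, hj⟩)
  have hopt : ∀ i, rev v (y - t • e) i ≤ rev v (y - t • e) k₀ := fun i => by
    have := hle (.inr i)
    simp only [Sum.elim_inr] at this
    rw [hrev, hrev]; linarith
  have hopt_eq : ∀ k, OptPrice v y k → rev v (y - t • e) k = rev v (y - t • e) k₀ :=
    fun k hk => by
      rw [hrev, hrev, he_rev k ((hO k).2 hk) k₀ ((hO k₀).2 hk₀), le_antisymm (hk₀ k) (hk k₀)]
  refine ⟨t, ht0, ?_, fun j => hle (.inl j), fun k hk i => (hopt i).trans (hopt_eq k hk).ge, ?_⟩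
  · by_contra! ht1
    exact hne (he_mkt.eq_of_le hy fun j =>
      (le_mul_of_one_le_left (he_mkt.1 j) ht1).trans (hle (.inl j))).symm
  · cases k with
    | inl j =>
      simp only [Sum.elim_inl] at hak htight
      exact .inl ⟨j, htight ▸ mul_pos ht0 hak, htight.symm⟩
    | inr i =>
      simp only [Sum.elim_inr] at hak htight
      refine .inr ⟨i, fun hi => ?_, fun i' => (hopt i').trans ?_⟩
      · simp [he_rev i ((hO i).2 hi) k₀ ((hO k₀).2 hk₀)] at hak
      · rw [hrev, hrev]; linarith

theorem IsMarket.exists_peel (hv0 : ∀ k, 0 < v k) (hv : StrictMono v) (hy : IsMarket K y)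
    (hO : ∀ k, k ∈ O ↔ OptPrice v y k) (he : IsCharMarket v O e) (hne : y ≠ e) :
    ∃ (t : ℝ) (y' : Fin K → ℝ), 0 < t ∧ t < 1 ∧ IsMarket K y' ∧ y = t • e + (1 - t) • y' ∧
      (∀ k, OptPrice v y k → OptPrice v y' k) ∧
      {j | 0 < y' j}.ncard + {k | ¬ OptPrice v y' k}.ncard <
        {j | 0 < y j}.ncard + {k | ¬ OptPrice v y k}.ncard := by
  obtain ⟨t, ht0, ht1, hle, hopt, htight⟩ := hy.exists_peel_scale hv0 hv hO he hne
  have h1t : 0 < (1 - t)⁻¹ := inv_pos.2 (sub_pos.2 ht1)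
  set y' := (1 - t)⁻¹ • (y - t • e)
  have hy' : ∀ j, y' j = (1 - t)⁻¹ * (y j - t * e j) := fun j => rfl
  have hopt' : ∀ k, OptPrice v y' k ↔ OptPrice v (y - t • e) k := fun k => optPrice_smul_iff h1t
  have hsupp : {j | 0 < y' j} ⊆ {j | 0 < y j} := fun j hj =>
    (mul_nonneg ht0.le (he.1.1 j)).trans_lt (by simpa [hy', mul_pos_iff_of_pos_left h1t] using hj)
  have hnopt : {k | ¬ OptPrice v y' k} ⊆ {k | ¬ OptPrice v y k} :=
    fun k hk hyk => hk ((hopt' k).2 (hopt k hyk))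
  refine ⟨t, y', ht0, ht1, ⟨fun j => ?_, ?_⟩, ?_, fun k hk => (hopt' k).2 (hopt k hk), ?_⟩
  · rw [hy']; exact mul_nonneg h1t.le (sub_nonneg.2 (hle j))
  · simp only [hy', ← mul_sum, sum_sub_distrib, hy.2, he.1.2]
    rw [mul_one, inv_mul_cancel₀ (sub_pos.2 ht1).ne']
  · rw [smul_smul, mul_inv_cancel₀ (sub_pos.2 ht1).ne', one_smul]; abel
  · have := Set.ncard_le_ncard hsupp
    have := Set.ncard_le_ncard hnopt
    rcases htight with ⟨j, hyj, hj⟩ | ⟨i, hi, hi'⟩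
    · have := Set.ncard_lt_ncard ((Set.ssubset_iff_of_subset hsupp).2
        ⟨j, hyj, by simp [hy', ← hj]⟩)
      omega
    · have := Set.ncard_lt_ncard ((Set.ssubset_iff_of_subset hnopt).2
        ⟨i, hi, not_not.2 ((hopt' i).2 hi')⟩)
      omega

theorem IsMarket.mem_convexHull_charMarkets (hv0 : ∀ k, 0 < v k)
    (hv : StrictMono v) {xS : Finset (Fin K) → Fin K → ℝ}
    (hxS : ∀ S : Finset (Fin K), S.Nonempty → IsCharMarket v S (xS S)) (hy : IsMarket K y) :
    y ∈ convexHull ℝ (xS '' {S | ∀ k, OptPrice v y k → k ∈ S}) := by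
  classical
  induction hn : {j | 0 < y j}.ncard + {k | ¬ OptPrice v y k}.ncard
    using Nat.strong_induction_on generalizing y with
  | _ n ih =>
  set O := univ.filter (OptPrice v y)
  have hO : ∀ k, k ∈ O ↔ OptPrice v y k := by simp [O]
  have heO : xS O ∈ xS '' {S | ∀ k, OptPrice v y k → k ∈ S} := ⟨O, fun k => (hO k).2, rfl⟩
  by_cases hye : y = xS O
  · have := subset_convexHull ℝ _ heO
    rwa [← hye] at this
  obtain ⟨k₀, hk₀⟩ := hy.exists_optPrice (v := v)
  obtain ⟨t, y', ht0, ht1, hy', hy_eq, hopt, hlt⟩ :=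
    hy.exists_peel hv0 hv hO (hxS O ⟨k₀, (hO k₀).2 hk₀⟩) hye
  have hy'mem := ih _ (hn ▸ hlt) hy' rfl
  have hmono := Set.image_mono (f := xS) fun S (hS : ∀ k, _ → k ∈ S) k hk => hS k (hopt k hk)
  have := (convex_convexHull ℝ _) (subset_convexHull ℝ _ heO) (convexHull_mono hmono hy'mem)
    ht0.le (sub_pos.2 ht1).le (add_sub_cancel t 1)
  rwa [← hy_eq] at this

theorem IsMarket.exists_extension_away (hx : IsMarket K x) (hxpos : ∀ j, 0 < x j)
    (hb : IsMarket K b)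
    (hb_rev : ∀ k, OptPrice v x k → ∀ k', OptPrice v x k' → rev v b k = rev v b k') :
    ∃ ε : ℝ, 0 < ε ∧ IsMarket K ((1 + ε) • x - ε • b) ∧
      ∀ k, OptPrice v x k → OptPrice v ((1 + ε) • x - ε • b) k := by
  obtain ⟨k₀, hk₀⟩ := hx.exists_optPrice (v := v)
  have hrev : ∀ ε i, rev v ((1 + ε) • x - ε • b) i = (1 + ε) * rev v x i - ε * rev v b i :=
    fun ε i => by rw [rev_sub, rev_smul, rev_smul]
  -- constraints `inl j`: `ε * b j ≤ x j`, and `inr i`: `rev z i ≤ rev z k₀` for the new market `z`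
  obtain ⟨ε, hε, hle, -⟩ := exists_largest_pos_mul_le
    (Sum.elim b fun i => (rev v b k₀ - rev v b i) - (rev v x k₀ - rev v x i))
    (Sum.elim x fun i => rev v x k₀ - rev v x i)
    (Sum.forall.2 ⟨hx.1, fun i => sub_nonneg.2 (hk₀ i)⟩)
    (Sum.forall.2 ⟨fun j _ => hxpos j, fun i hi => by
      by_contra! hxi
      simp only [Sum.elim_inr] at hi hxi
      have hi_opt : OptPrice v x i := fun i' => (hk₀ i').trans (by linarith)
      simp [hb_rev i hi_opt k₀ hk₀, le_antisymm (hk₀ i) (hi_opt k₀)] at hi⟩)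
    (let ⟨j, hj⟩ := hb.exists_pos; ⟨.inl j, hj⟩)
  refine ⟨ε, hε, ⟨fun j => ?_, ?_⟩, fun k hk i => ?_⟩
  · have := hle (.inl j)
    simp only [Sum.elim_inl] at this
    simp only [Pi.sub_apply, Pi.smul_apply, smul_eq_mul]
    nlinarith [hx.1 j]
  · simp only [Pi.sub_apply, Pi.smul_apply, smul_eq_mul, sum_sub_distrib, ← mul_sum, hx.2, hb.2]
    ring
  · have := hle (.inr i)
    simp only [Sum.elim_inr] at this
    rw [hrev, hrev, hb_rev k hk k₀ hk₀, le_antisymm (hk₀ k) (hk k₀)]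
    linarith

end Market

theorem stmt8_general {K : ℕ} (v : Fin K → ℝ)
    (hv0 : ∀ k, 0 < v k) (hv : StrictMono v)
    (xstar : Fin K → ℝ) (hxstar : IsMarket K xstar) (hxpos : ∀ k, 0 < xstar k)
    (xS : Finset (Fin K) → Fin K → ℝ)
    (hxS : ∀ S : Finset (Fin K), S.Nonempty → IsCharMarket v S (xS S)) :
    xstar ∈ intrinsicInterior ℝ
        (convexHull ℝ (xS '' {S : Finset (Fin K) | ∀ k, OptPrice v xstar k → k ∈ S})) := by
  classical
  set 𝒮 := {S : Finset (Fin K) | ∀ k, OptPrice v xstar k → k ∈ S}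
  obtain ⟨k₀, hk₀⟩ := hxstar.exists_optPrice (v := v)
  have hchar : ∀ S : 𝒮, IsCharMarket v S (xS S) := fun S => hxS S ⟨k₀, S.2 k₀ hk₀⟩
  have hN : (0 : ℝ) < Fintype.card 𝒮 :=
    Nat.cast_pos.2 (Fintype.card_pos_iff.2 ⟨⟨univ, fun k _ => mem_univ k⟩⟩)
  set w : 𝒮 → ℝ := fun _ => (Fintype.card 𝒮 : ℝ)⁻¹
  have hw1 : ∑ S, w S = 1 := by rw [sum_const, card_univ, nsmul_eq_mul, mul_inv_cancel₀ hN.ne']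
  set b := ∑ S : 𝒮, w S • xS S
  have hb : IsMarket K b := isMarket_sum_smul (fun _ => inv_nonneg.2 hN.le) hw1 (hchar · |>.1)
  have hb_rev : ∀ k, OptPrice v xstar k → ∀ k', OptPrice v xstar k' → rev v b k = rev v b k' :=
    fun k hk k' hk' => by
      simp only [b, rev_sum, rev_smul]
      exact sum_congr rfl fun S _ => by rw [(hchar S).2.2 k (S.2 k hk) k' (S.2 k' hk')]
  obtain ⟨ε, hε, hz, hz_opt⟩ := hxstar.exists_extension_away hxpos hb hb_rev
  rw [Set.image_eq_range]
  refine mem_intrinsicInterior_convexHull_of_extension (fun _ => inv_pos.2 hN) hw1 hε ?_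
  rw [← Set.image_eq_range]
  exact convexHull_mono (Set.image_mono fun S (hS : ∀ k, _ → k ∈ S) k hk => hS k (hz_opt k hk))
    (hz.mem_convexHull_charMarkets hv0 hv hxS)

theorem stmt8 {K : ℕ} (hK : 2 ≤ K) (v : Fin K → ℝ)
    (hv0 : ∀ k, 0 < v k) (hv : StrictMono v)
    (xstar : Fin K → ℝ) (hxstar : IsMarket K xstar) (hxpos : ∀ k, 0 < xstar k)
    (xS : Finset (Fin K) → Fin K → ℝ)
    (hxS : ∀ S : Finset (Fin K), S.Nonempty → IsCharMarket v S (xS S)) :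
    xstar ∈ intrinsicInterior ℝ
        (convexHull ℝ (xS '' {S : Finset (Fin K) | ∀ k, OptPrice v xstar k → k ∈ S})) :=
  stmt8_general v hv0 hv xstar hxstar hxpos xS hxS
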